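/- The long-term average energy consumption of the threshold-k policy in the constant-distortion case equals W·Σ_{Δ=k}^{∞} z_Δ = W / ((k−1)(1−B) + 1), where the series converges. -/

import Mathlib

lemma hasSum_shift_of_eq_geometric {z : ℕ → ℝ} {k : ℕ} {c r : ℝ} (hr0 : 0 ≤ r) (hr1 : r < 1)
    (hz : ∀ n, k ≤ n → z n = c * r ^ (n - k)) :
    HasSum (fun n => z (k + n)) (c * (1 - r)⁻¹) := by
  have hshift : (fun n => z (k + n)) = fun n => c * r ^ n := by
    funext n
    rw [hz (k + n) (Nat.le_add_right k n), Nat.add_sub_cancel_left]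
  rw [hshift]
  exact (hasSum_geometric_of_lt_one hr0 hr1).mul_left c

lemma inv_add_one_div_mul_inv {a b : ℝ} (hb : b ≠ 0) :
    (a + 1 / b)⁻¹ * b⁻¹ = (a * b + 1)⁻¹ := by
  rw [← mul_inv, add_mul, one_div, inv_mul_cancel₀ hb]

theorem average_energy_cost (k : ℕ) (B W : ℝ) (hB0 : 0 ≤ B) (hB1 : B < 1)
    (z : ℕ → ℝ)
    (hz2 : ∀ Δ : ℕ, k ≤ Δ → z Δ = ((k : ℝ) - 1 + 1 / (1 - B))⁻¹ * B ^ (Δ - k)) :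
    HasSum (fun n : ℕ => W * z (k + n)) (W / (((k : ℝ) - 1) * (1 - B) + 1)) := by
  have htail := (hasSum_shift_of_eq_geometric hB0 hB1 hz2).mul_left W
  rwa [inv_add_one_div_mul_inv (sub_ne_zero.mpr hB1.ne'), ← div_eq_mul_inv] at htail
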